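/- arXiv:2605.18619 — 4 statements merged into one kernel-verified Lean document; each statement's English description precedes it below -/
import Mathlib

section
/- Let G = (V, E) be a finite connected simple graph with positive edge weights w(e) > 0, incidence matrix D, weight matrix W = diag(w(e)), and weighted graph Laplacian L = Dᵀ W² D. Fix a root vertex r ∈ V and λ > 0, and let e_r ∈ ℝ^V be the standard basis vector supported on r. Then det(L + λ² e_r e_rᵀ) = λ² · Σ_{T ∈ 𝒯(G)} Π_{e ∈ T} w(e)². -/
open Matrix MeasureTheory
open scoped BigOperators Classical

noncomputable section

/-- Incidence (finite difference) matrix of an oriented edge set: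
`D e v = 1` if `v` is the head of `e`, `-1` if `v` is the tail, `0` otherwise. -/
def incMatrix {V E : Type*} [DecidableEq V] (head tail : E → V) : Matrix E V ℝ :=
  Matrix.of fun e v => if v = head e then 1 else if v = tail e then -1 else 0

/-- The simple graph on `V` whose adjacency comes from the edges in `s`. -/
def graphOf {V E : Type*} (head tail : E → V) (s : Set E) : SimpleGraph V :=
  SimpleGraph.fromRel fun v₁ v₂ => ∃ e ∈ s, head e = v₁ ∧ tail e = v₂

/-- A set of edges forms a spanning tree: the resulting spanning subgraph is
connected and acyclic. -/
def IsSpanningTree {V E : Type*} (head tail : E → V) (s : Finset E) : Prop :=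
  (graphOf head tail (↑s : Set E)).Connected ∧ (graphOf head tail (↑s : Set E)).IsAcyclic

/-!
The Laplacian `L = Dᵀ W² D` kills the constant vector, so `det L = 0` and, by linearity of the
determinant in row `r`, `det (L + λ² eᵣ eᵣᵀ) = λ² det L'`, where `L' = D'ᵀ W² D'` and `D'` is `D`
with the column of `r` deleted. Cauchy–Binet expands `det L'` over the sets `T` of `|V| - 1` edges
as `∑ det (D'_T)² ∏_{e ∈ T} w(e)²`. If `T` is a spanning tree, walking from `r` inside `T` writes
every `e_v - e_r` as an integer combination of rows of `D'_T`, so `D'_T` has an integer inverse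
and `det D'_T = ±1`. Otherwise `T`, having `|V| - 1` edges, is disconnected, and the indicator of
a component avoiding `r` lies in the kernel of `D'_T`.
-/

namespace Matrix

variable {n m R : Type*} [Fintype n] [DecidableEq n] [Fintype m] [CommRing R]

theorem det_updateRow_single_self (A : Matrix n n R) (r : n) :
    (A.updateRow r (Pi.single r 1)).det = (A.submatrix ((↑) : {i // i ≠ r} → n) (↑)).det := by
  have : Unique {i // ¬i ≠ r} := ⟨⟨⟨r, not_not.2 rfl⟩⟩, fun i => Subtype.ext (not_not.1 i.2)⟩
  rw [← det_submatrix_equiv_self (Equiv.sumCompl (· ≠ r)),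
    show (A.updateRow r (Pi.single r 1)).submatrix (Equiv.sumCompl (· ≠ r))
        (Equiv.sumCompl (· ≠ r)) = fromBlocks (A.submatrix (↑) (↑)) (A.submatrix (↑) (↑)) 0 1 by
      ext (i | i) (j | j)
      · simp [updateRow_ne i.2]
      · simp [updateRow_ne i.2]
      · simp [not_not.1 i.2, j.2]
      · simp [not_not.1 j.2, Subsingleton.elim i j],
    det_fromBlocks_zero₂₁, det_one, mul_one]

theorem det_add_single_self_of_det_eq_zero (A : Matrix n n R) (r : n) (c : R) (hA : A.det = 0) :
    (A + single r r c).det = c * (A.submatrix ((↑) : {i // i ≠ r} → n) (↑)).det := by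
  have hrow : A + single r r c = A.updateRow r (A r + c • Pi.single r 1) := by
    ext i j
    by_cases hi : i = r
    · subst hi
      by_cases hj : j = i
      · simp [hj]
      · simp [hj, Ne.symm hj]
    · simp [updateRow_ne hi, Ne.symm hi]
  rw [hrow, det_updateRow_add, det_updateRow_smul, updateRow_eq_self, hA, zero_add,
    det_updateRow_single_self]

theorem det_mul_eq_sum_prod_mul_det_submatrix (A : Matrix n m R) (B : Matrix m n R) :
    (A * B).det = ∑ f : n → m, (∏ i, A i (f i)) * (B.submatrix f id).det := by
  have hrows : A * B = of fun i => ∑ k, A i k • B k := by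
    ext i j
    simp [mul_apply, Finset.sum_apply]
  rw [hrows]
  refine ((detRowAlternating : (n → R) [⋀^n]→ₗ[R] R).toMultilinearMap.map_sum
    fun i k => A i k • B k).trans (Finset.sum_congr rfl fun f _ => ?_)
  rw [MultilinearMap.map_smul_univ, smul_eq_mul]
  rfl

theorem sum_filter_image_eq_det_mul_det [DecidableEq m] (A : Matrix n m R) (B : Matrix m n R)
    (s : Finset m) (e : n ≃ s) :
    ∑ f ∈ Finset.univ.filter (fun f : n → m => Finset.univ.image f = s),
        (∏ i, A i (f i)) * (B.submatrix f id).det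
      = (A.submatrix id (fun i => (e i : m))).det * (B.submatrix (fun i => (e i : m)) id).det := by
  set g : n → m := fun i => (e i : m)
  have hcard : (Finset.univ : Finset n).card = s.card := by
    rw [Finset.card_univ, Fintype.card_congr e, Fintype.card_coe]
  have hfiber : ∑ σ : Equiv.Perm n, (∏ i, A i (g (σ i))) * (B.submatrix (g ∘ σ) id).det
      = ∑ f ∈ Finset.univ.filter (fun f : n → m => Finset.univ.image f = s),
          (∏ i, A i (f i)) * (B.submatrix f id).det := by
    refine Finset.sum_nbij (fun σ => g ∘ σ) (fun σ _ => ?_) (fun σ₁ _ σ₂ _ h => ?_)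
      (fun f hf => ?_) (fun _ _ => rfl)
    · refine Finset.mem_filter.2 ⟨Finset.mem_univ _, Finset.ext fun x => ⟨?_, fun hx => ?_⟩⟩
      · intro hx
        obtain ⟨i, -, rfl⟩ := Finset.mem_image.1 hx
        exact (e (σ i)).2
      · exact Finset.mem_image.2 ⟨σ.symm (e.symm ⟨x, hx⟩), Finset.mem_univ _, by simp [g]⟩
    · exact Equiv.ext fun i => e.injective (Subtype.ext (congrFun h i))
    · have himage : Finset.univ.image f = s := (Finset.mem_filter.1 hf).2
      have hmem : ∀ i, f i ∈ s := fun i => himage ▸ Finset.mem_image_of_mem f (Finset.mem_univ i)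
      have hinj : Function.Injective fun i => e.symm ⟨f i, hmem i⟩ := by
        intro i j hij
        exact Finset.card_image_iff.1 (by rw [himage, hcard]) (Finset.mem_coe.2 (Finset.mem_univ i))
          (Finset.mem_coe.2 (Finset.mem_univ j)) (congrArg Subtype.val (e.symm.injective hij))
      refine ⟨Equiv.ofBijective _ (Finite.injective_iff_bijective.1 hinj), by simp, ?_⟩
      funext i
      simp [g]
  rw [← hfiber, ← det_transpose (A.submatrix id g), det_apply', Finset.sum_mul]
  refine Finset.sum_congr rfl fun σ _ => ?_
  rw [show B.submatrix (g ∘ σ) id = (B.submatrix g id).submatrix σ id from rfl, det_permute]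
  simp only [transpose_apply, submatrix_apply, id]
  ring

end Matrix

theorem card_subtype_ne_add_one {V : Type*} [Fintype V] [DecidableEq V] (r : V) :
    Fintype.card {v // v ≠ r} + 1 = Fintype.card V := by
  rw [Fintype.card_subtype_compl, Fintype.card_subtype_eq]
  have := Fintype.card_pos_iff.2 ⟨r⟩
  omega

section GraphOf

variable {V E : Type*} {head tail : E → V}

theorem graphOf_adj_of_mem {e : E} (he : head e ≠ tail e) {s : Set E} (hs : e ∈ s) :
    (graphOf head tail s).Adj (head e) (tail e) :=
  (SimpleGraph.fromRel_adj _ _ _).2 ⟨he, Or.inl ⟨e, hs, rfl, rfl⟩⟩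

theorem graphOf_edgeSet (hne : ∀ e, head e ≠ tail e) (s : Set E) :
    (graphOf head tail s).edgeSet = (fun e => s(head e, tail e)) '' s := by
  ext x
  induction x using Sym2.ind with
  | _ a b =>
    simp only [SimpleGraph.mem_edgeSet, graphOf, SimpleGraph.fromRel_adj, Set.mem_image,
      Sym2.eq_iff]
    constructor
    · rintro ⟨-, ⟨e, hs, rfl, rfl⟩ | ⟨e, hs, rfl, rfl⟩⟩
      · exact ⟨e, hs, Or.inl ⟨rfl, rfl⟩⟩
      · exact ⟨e, hs, Or.inr ⟨rfl, rfl⟩⟩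
    · rintro ⟨e, hs, ⟨rfl, rfl⟩ | ⟨rfl, rfl⟩⟩
      · exact ⟨hne e, Or.inl ⟨e, hs, rfl, rfl⟩⟩
      · exact ⟨(hne e).symm, Or.inr ⟨e, hs, rfl, rfl⟩⟩

theorem isSpanningTree_iff [Fintype V] (hne : ∀ e, head e ≠ tail e)
    (hinj : Function.Injective fun e => s(head e, tail e)) (s : Finset E) :
    IsSpanningTree head tail s ↔
      (graphOf head tail ↑s).Connected ∧ s.card + 1 = Fintype.card V := by
  rw [IsSpanningTree, ← SimpleGraph.isTree_iff, SimpleGraph.isTree_iff_connected_and_card,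
    Nat.card_coe_set_eq, graphOf_edgeSet hne, Set.ncard_image_of_injective _ hinj,
    Set.ncard_coe_finset, Nat.card_eq_fintype_card]

end GraphOf

def intIncMatrix {V E : Type*} [DecidableEq V] (head tail : E → V) : Matrix E V ℤ :=
  Matrix.of fun e v => if v = head e then 1 else if v = tail e then -1 else 0

section Incidence

variable {V E : Type*} [DecidableEq V] {head tail : E → V}

theorem incMatrix_eq_map_intIncMatrix (head tail : E → V) :
    incMatrix head tail = (intIncMatrix head tail).map (↑) := by
  ext e v
  simp only [incMatrix, intIncMatrix, of_apply, map_apply]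
  split_ifs <;> simp

theorem intIncMatrix_row {e : E} (he : head e ≠ tail e) :
    intIncMatrix head tail e = Pi.single (head e) 1 - Pi.single (tail e) 1 := by
  ext v
  by_cases hv : v = head e
  · simp [intIncMatrix, hv, he]
  · by_cases hv' : v = tail e <;> simp [intIncMatrix, hv, hv', he.symm]

theorem incMatrix_mulVec [Fintype V] (hne : ∀ e, head e ≠ tail e) (y : V → ℝ) :
    incMatrix head tail *ᵥ y = fun e => y (head e) - y (tail e) := by
  ext e
  change ∑ v, incMatrix head tail e v * y v = _
  simp [incMatrix_eq_map_intIncMatrix, intIncMatrix_row (hne e), sub_mul, Finset.sum_sub_distrib,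
    Pi.single_apply]

theorem single_sub_single_mem_span_of_reachable (hne : ∀ e, head e ≠ tail e) {ι : Type*}
    (f : ι → E) {a b : V} (h : (graphOf head tail (Set.range f)).Reachable a b) :
    (Pi.single b 1 - Pi.single a 1 : V → ℤ)
      ∈ Submodule.span ℤ (Set.range fun i => intIncMatrix head tail (f i)) := by
  obtain ⟨p⟩ := h
  induction p with
  | nil => simp
  | @cons a c b hadj p ih =>
    have hstep : (Pi.single c 1 - Pi.single a 1 : V → ℤ)
        ∈ Submodule.span ℤ (Set.range fun i => intIncMatrix head tail (f i)) := by
      obtain ⟨-, ⟨-, ⟨i, rfl⟩, rfl, rfl⟩ | ⟨-, ⟨i, rfl⟩, rfl, rfl⟩⟩ :=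
        (SimpleGraph.fromRel_adj _ _ _).1 hadj
      · rw [← neg_sub, ← intIncMatrix_row (hne _)]
        exact neg_mem (Submodule.subset_span ⟨i, rfl⟩)
      · rw [← intIncMatrix_row (hne _)]
        exact Submodule.subset_span ⟨i, rfl⟩
    convert add_mem ih hstep using 1
    abel

end Incidence

section ReducedIncidence

variable {V E : Type*} [Fintype V] [DecidableEq V] {head tail : E → V}

theorem isUnit_det_intIncMatrix_submatrix (hne : ∀ e, head e ≠ tail e) {r : V}
    (f : {v // v ≠ r} → E) (h : ∀ v, (graphOf head tail (Set.range f)).Reachable r v) :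
    IsUnit ((intIncMatrix head tail).submatrix f (↑)).det := by
  choose c hc using fun v : {v // v ≠ r} =>
    (Submodule.mem_span_range_iff_exists_fun ℤ).1
      (single_sub_single_mem_span_of_reachable hne f (h v))
  refine isUnit_det_of_left_inverse (B := of c) ?_
  ext v x
  have hx := congrFun (hc v) x
  simp only [Finset.sum_apply, Pi.smul_apply, smul_eq_mul, Pi.sub_apply] at hx
  simp [mul_apply, hx, Pi.single_apply, x.2, one_apply, Subtype.ext_iff, eq_comm]

theorem det_incMatrix_submatrix_sq_eq_one (hne : ∀ e, head e ≠ tail e) {r : V}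
    (f : {v // v ≠ r} → E) (h : (graphOf head tail (Set.range f)).Connected) :
    ((incMatrix head tail).submatrix f (↑)).det ^ 2 = 1 := by
  rw [incMatrix_eq_map_intIncMatrix, submatrix_map, ← Int.cast_det]
  exact_mod_cast Int.isUnit_sq (isUnit_det_intIncMatrix_submatrix hne f fun v => h.preconnected r v)

theorem det_incMatrix_submatrix_eq_zero_of_not_reachable (hne : ∀ e, head e ≠ tail e) {r v : V}
    (f : {v // v ≠ r} → E) (h : ¬(graphOf head tail (Set.range f)).Reachable r v) :
    ((incMatrix head tail).submatrix f (↑)).det = 0 := by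
  set y : V → ℝ := fun u => if (graphOf head tail (Set.range f)).Reachable v u then 1 else 0
  have hyr : y r = 0 := if_neg fun h' => h h'.symm
  have hvr : v ≠ r := by rintro rfl; exact h (SimpleGraph.Reachable.refl _)
  refine exists_mulVec_eq_zero_iff.1 ⟨fun u => y u, fun h0 => ?_, ?_⟩
  · simpa [y] using congrFun h0 ⟨v, hvr⟩
  · ext u
    have hsum : ∑ x : {v // v ≠ r}, incMatrix head tail (f u) x * y x
        = (incMatrix head tail *ᵥ y) (f u) := by
      rw [mulVec, dotProduct,
        ← Fintype.sum_subtype_add_sum_subtype (· ≠ r) (fun v => incMatrix head tail (f u) v * y v),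
        left_eq_add]
      exact Finset.sum_eq_zero fun x _ => by rw [not_not.1 x.2, hyr, mul_zero]
    have hadj := graphOf_adj_of_mem (hne (f u)) (Set.mem_range_self u)
    change ∑ x : {v // v ≠ r}, incMatrix head tail (f u) x * y x = 0
    rw [hsum, incMatrix_mulVec hne, sub_eq_zero]
    by_cases hreach : (graphOf head tail (Set.range f)).Reachable v (head (f u))
    · simp [y, hreach, hreach.trans hadj.reachable]
    · have hreach' : ¬(graphOf head tail (Set.range f)).Reachable v (tail (f u)) :=
        fun h' => hreach (h'.trans hadj.symm.reachable)
      simp [y, hreach, hreach']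

theorem det_incMatrix_submatrix_eq_zero_of_not_isSpanningTree (hne : ∀ e, head e ≠ tail e)
    (hinj : Function.Injective fun e => s(head e, tail e)) {r : V}
    [DecidableEq E] (f : {v // v ≠ r} → E) (h : ¬IsSpanningTree head tail (Finset.univ.image f)) :
    ((incMatrix head tail).submatrix f (↑)).det = 0 := by
  by_cases hf : f.Injective
  · have hconn : ¬(graphOf head tail (Set.range f)).Connected := fun hc => h <|
      (isSpanningTree_iff hne hinj _).2 ⟨by simpa using hc, by
        rw [Finset.card_image_of_injective _ hf, Finset.card_univ, card_subtype_ne_add_one]⟩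
    obtain ⟨v, hv⟩ : ∃ v, ¬(graphOf head tail (Set.range f)).Reachable r v := by
      contrapose! hconn
      exact (SimpleGraph.connected_iff_exists_forall_reachable _).2 ⟨r, hconn⟩
    exact det_incMatrix_submatrix_eq_zero_of_not_reachable hne f hv
  · obtain ⟨i, j, hij, hne'⟩ := Function.not_injective_iff.1 hf
    exact det_zero_of_row_eq hne' (funext fun x => by simp [hij])

end ReducedIncidence

section Laplacian

variable {V E : Type*} [Fintype V] [DecidableEq V] [Fintype E] {head tail : E → V}

theorem det_mul_incMatrix_eq_zero [Nonempty V] (hne : ∀ e, head e ≠ tail e) (A : Matrix V E ℝ) :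
    (A * incMatrix head tail).det = 0 :=
  exists_mulVec_eq_zero_iff.1
    ⟨1, one_ne_zero, by
      rw [← mulVec_mulVec, incMatrix_mulVec hne]
      simp only [Pi.one_apply, sub_self]
      exact mulVec_zero A⟩

theorem det_reducedLaplacian [DecidableEq E] (hne : ∀ e, head e ≠ tail e)
    (hinj : Function.Injective fun e => s(head e, tail e)) (d : E → ℝ) (r : V) :
    (((incMatrix head tail).submatrix id ((↑) : {v // v ≠ r} → V))ᵀ * diagonal d
        * (incMatrix head tail).submatrix id (↑)).det
      = ∑ s ∈ Finset.univ.filter (IsSpanningTree head tail), ∏ e ∈ s, d e := by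
  set B := (incMatrix head tail).submatrix id ((↑) : {v // v ≠ r} → V)
  have hB (f : {v // v ≠ r} → E) : B.submatrix f id = (incMatrix head tail).submatrix f (↑) := rfl
  rw [det_mul_eq_sum_prod_mul_det_submatrix, ← Finset.sum_fiberwise Finset.univ
    (fun f => Finset.univ.image f), Finset.sum_filter]
  refine Finset.sum_congr rfl fun s _ => ?_
  split_ifs with hs
  · obtain ⟨hconn, hcard⟩ := (isSpanningTree_iff hne hinj s).1 hs
    let e : {v // v ≠ r} ≃ s := Fintype.equivOfCardEq <| by
      rw [Fintype.card_coe]; have := card_subtype_ne_add_one r; omega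
    have hrange : Set.range (fun i => (e i : E)) = s := by
      rw [← Subtype.range_coe (s := (s : Set E))]
      exact e.surjective.range_comp _
    have hmul : (Bᵀ * diagonal d).submatrix id (fun i => (e i : E))
        = (B.submatrix (fun i => (e i : E)) id)ᵀ * diagonal (fun i => d (e i)) := by
      ext i j; simp
    rw [sum_filter_image_eq_det_mul_det _ _ s e, hmul, det_mul, det_transpose, det_diagonal,
      mul_right_comm, ← sq, hB, det_incMatrix_submatrix_sq_eq_one hne _ (hrange ▸ hconn), one_mul,
      ← Finset.prod_coe_sort s, e.prod_comp (fun x => d x)]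
  · exact Finset.sum_eq_zero fun f hf => by
      rw [← (Finset.mem_filter.1 hf).2] at hs
      rw [hB, det_incMatrix_submatrix_eq_zero_of_not_isSpanningTree hne hinj f hs, mul_zero]

end Laplacian

theorem matrix_tree_theorem_rooted_general
    {V E : Type*} [Fintype V] [DecidableEq V] [Fintype E] [DecidableEq E]
    (head tail : E → V) (w : E → ℝ)
    (hne : ∀ e, head e ≠ tail e)
    (hinj : ∀ e₁ e₂, s(head e₁, tail e₁) = s(head e₂, tail e₂) → e₁ = e₂)
    (r : V) (lam : ℝ) :
    ((incMatrix head tail)ᵀ * Matrix.diagonal (fun e => w e ^ 2) * incMatrix head tail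
        + Matrix.single r r (lam ^ 2)).det
      = lam ^ 2 * ∑ s ∈ Finset.univ.filter (fun s : Finset E => IsSpanningTree head tail s),
          ∏ e ∈ s, w e ^ 2 := by
  have : Nonempty V := ⟨r⟩
  rw [det_add_single_self_of_det_eq_zero _ r _ (det_mul_incMatrix_eq_zero hne _)]
  exact congrArg _ (det_reducedLaplacian hne hinj _ r)

/-- **Weighted matrix-tree theorem with a root.** For a finite connected simple graph
with positive edge weights, root `r` and root weight `λ > 0`,
`det(L + λ² eᵣ eᵣᵀ) = λ² · Σ_{T ∈ 𝒯(G)} Π_{e ∈ T} w(e)²`. -/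
theorem matrix_tree_theorem_rooted
    {V E : Type*} [Fintype V] [DecidableEq V] [Fintype E] [DecidableEq E]
    (head tail : E → V) (w : E → ℝ)
    (hne : ∀ e, head e ≠ tail e)
    (hinj : ∀ e₁ e₂, s(head e₁, tail e₁) = s(head e₂, tail e₂) → e₁ = e₂)
    (hw : ∀ e, 0 < w e)
    (hconn : (graphOf head tail (Set.univ : Set E)).Connected)
    (r : V) (lam : ℝ) (hlam : 0 < lam) :
    ((incMatrix head tail)ᵀ * Matrix.diagonal (fun e => w e ^ 2) * incMatrix head tail
        + Matrix.single r r (lam ^ 2)).det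
      = lam ^ 2 * ∑ s ∈ Finset.univ.filter (fun s : Finset E => IsSpanningTree head tail s),
          ∏ e ∈ s, w e ^ 2 :=
  matrix_tree_theorem_rooted_general head tail w hne hinj r lam
end
end

section
/- Let G = (V, E) be a finite tree (a connected acyclic simple graph) with |V| = n, positive edge weights w(e) > 0, incidence matrix D, W = diag(w(e)), root r ∈ V, and λ > 0. Then the rooted Gaussian Markov random field density on G factorizes with explicit normalization: π(x) = (2π)^{−n/2} λ (Π_{e ∈ E} w(e)) exp(−½ xᵀ (Dᵀ W² D + λ² e_r e_rᵀ) x) integrates to 1 over ℝ^V; equivalently det(Dᵀ W² D + λ² e_r e_rᵀ) = λ² Π_{e ∈ E} w(e)². -/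
/-!
Stack the row `λ eᵣ` on top of `W D`. Since the tree has one more vertex than edges, this is a
square matrix `A` after matching the root with the new row and every other vertex `v` with the
edge from `v` to its parent (the neighbour one step closer to `r`). Then `Aᵀ A` is the precision
matrix, and ordering the vertices by depth makes `A` lower triangular with diagonal entries `λ`
and `± w(e)`, so `det A = ± λ ∏ w(e)`. The normalization follows by the substitution `y = A x`
in the standard Gaussian integral.
-/

open Matrix MeasureTheory
open scoped BigOperators Classical

noncomputable section

namespace Matrix

variable {n R α : Type*} [Fintype n] [DecidableEq n] [CommRing R]
  [AddCommMonoid α] [PartialOrder α] [IsOrderedCancelAddMonoid α]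

theorem det_eq_prod_diag_of_apply_ne_zero_lt (M : Matrix n n R) (b : n → α)
    (h : ∀ i j, i ≠ j → M i j ≠ 0 → b j < b i) : M.det = ∏ i, M i i := by
  rw [det_apply', Finset.sum_eq_single 1 ?_ (by simp)]
  · simp
  intro σ _ hσ
  obtain ⟨k, hk⟩ : ∃ k, σ k ≠ k := by
    by_contra! hfix
    exact hσ (Equiv.ext hfix)
  obtain ⟨i, hi⟩ : ∃ i, M (σ i) i = 0 := by
    by_contra! hne
    have hlt : ∑ i, b i < ∑ i, b (σ i) :=
      Finset.sum_lt_sum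
        (fun i _ => (eq_or_ne (σ i) i).elim (fun h' => by rw [h'])
          fun h' => (h _ _ h' (hne i)).le)
        ⟨k, Finset.mem_univ k, h _ _ hk (hne k)⟩
    exact (Equiv.sum_comp σ b ▸ hlt).false
  exact mul_eq_zero_of_right _ (Finset.prod_eq_zero (Finset.mem_univ i) hi)

end Matrix

theorem Real.rpow_neg_half_mul_sqrt_pow {x : ℝ} (hx : 0 < x) (n : ℕ) :
    x ^ (-(n : ℝ) / 2) * √x ^ n = 1 := by
  rw [Real.sqrt_eq_rpow, ← Real.rpow_natCast, ← Real.rpow_mul hx.le, ← Real.rpow_add hx,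
    show -(n : ℝ) / 2 + 1 / 2 * n = 0 by ring, Real.rpow_zero]

section Gaussian

variable {ι : Type*} [Fintype ι]

theorem integral_exp_neg_mul_dotProduct_self (b : ℝ) :
    ∫ y : ι → ℝ, Real.exp (-b * (y ⬝ᵥ y)) = √(Real.pi / b) ^ Fintype.card ι := by
  have hprod : ∀ y : ι → ℝ, Real.exp (-b * (y ⬝ᵥ y)) = ∏ i, Real.exp (-b * y i ^ 2) := by
    intro y
    rw [← Real.exp_sum, dotProduct, Finset.mul_sum]
    simp only [sq]
  simp_rw [hprod]
  rw [integral_fintype_prod_volume_eq_pow (fun t : ℝ => Real.exp (-b * t ^ 2)),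
    integral_gaussian]

theorem integral_exp_neg_mul_dotProduct_transpose_mul_self_mulVec [DecidableEq ι]
    (A : Matrix ι ι ℝ) (hA : A.det ≠ 0) (b : ℝ) :
    ∫ x : ι → ℝ, Real.exp (-b * (x ⬝ᵥ (Aᵀ * A) *ᵥ x))
      = √(Real.pi / b) ^ Fintype.card ι / |A.det| := by
  set g : (ι → ℝ) → ℝ := fun y => Real.exp (-b * (y ⬝ᵥ y))
  have hquad : ∀ x, x ⬝ᵥ (Aᵀ * A) *ᵥ x = A *ᵥ x ⬝ᵥ A *ᵥ x := fun x => by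
    rw [← mulVec_mulVec, dotProduct_mulVec, vecMul_transpose]
  have hg : Continuous g := by fun_prop
  calc ∫ x : ι → ℝ, Real.exp (-b * (x ⬝ᵥ (Aᵀ * A) *ᵥ x))
      = ∫ x : ι → ℝ, g (toLin' A x) := by simp_rw [hquad]; rfl
    _ = ∫ y, g y ∂(Measure.map (toLin' A) volume) :=
        (integral_map (LinearMap.continuous_on_pi _).aemeasurable
          hg.aestronglyMeasurable).symm
    _ = √(Real.pi / b) ^ Fintype.card ι / |A.det| := by
        rw [Real.map_matrix_volume_pi_eq_smul_volume_pi hA, integral_smul_measure,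
          ENNReal.toReal_ofReal (abs_nonneg _), integral_exp_neg_mul_dotProduct_self,
          abs_inv, smul_eq_mul, inv_mul_eq_div]

end Gaussian

section TreeIncidence

variable {V E : Type*} (head tail : E → V)

theorem graphOf_univ_adj {u v : V} :
    (graphOf head tail Set.univ).Adj u v ↔
      u ≠ v ∧ ∃ e, (head e = u ∧ tail e = v) ∨ (head e = v ∧ tail e = u) := by
  simp [graphOf, exists_or]

theorem card_add_one_eq_card_of_graphOf [Fintype V] [Fintype E]
    (hne : ∀ e, head e ≠ tail e)
    (hinj : ∀ e₁ e₂, s(head e₁, tail e₁) = s(head e₂, tail e₂) → e₁ = e₂)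
    (hconn : (graphOf head tail Set.univ).Connected)
    (hacyc : (graphOf head tail Set.univ).IsAcyclic) :
    Fintype.card E + 1 = Fintype.card V := by
  set G := graphOf head tail Set.univ
  have hmem : ∀ e, s(head e, tail e) ∈ G.edgeSet := fun e =>
    (graphOf_univ_adj head tail).2 ⟨hne e, e, .inl ⟨rfl, rfl⟩⟩
  have hbij : Function.Bijective fun e => (⟨s(head e, tail e), hmem e⟩ : G.edgeSet) := by
    refine ⟨fun e₁ e₂ h => hinj e₁ e₂ (congrArg Subtype.val h), ?_⟩
    rintro ⟨⟨u, v⟩, huv⟩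
    obtain ⟨-, e, he | he⟩ := (graphOf_univ_adj head tail).1 huv
    · exact ⟨e, by simp [he.1, he.2]⟩
    · exact ⟨e, by simp [he.1, he.2, Sym2.eq_swap]⟩
  rw [Fintype.card_of_bijective hbij, ← SimpleGraph.edgeFinset_card,
    (SimpleGraph.IsTree.mk hconn hacyc).card_edgeFinset]

def IsParentEdge (b : V → ℕ) (v : V) (e : E) : Prop :=
  (head e = v ∧ b (tail e) < b v) ∨ (tail e = v ∧ b (head e) < b v)

theorem exists_isParentEdge_dist (hconn : (graphOf head tail Set.univ).Connected)
    (r : V) {v : V} (hv : v ≠ r) :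
    ∃ e, IsParentEdge head tail (fun u => (graphOf head tail Set.univ).dist u r) v e := by
  obtain ⟨p, hp⟩ := hconn.exists_walk_length_eq_dist v r
  cases p with
  | nil => exact absurd rfl hv
  | @cons _ u _ hadj q =>
    have hlt : (graphOf head tail Set.univ).dist u r < (graphOf head tail Set.univ).dist v r := by
      have := SimpleGraph.dist_le q
      rw [← hp, SimpleGraph.Walk.length_cons]
      omega
    obtain ⟨-, e, he | he⟩ := (graphOf_univ_adj head tail).1 hadj
    · exact ⟨e, .inl ⟨he.1, he.2 ▸ hlt⟩⟩
    · exact ⟨e, .inr ⟨he.2, he.1 ▸ hlt⟩⟩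

theorem IsParentEdge.eq_of_isParentEdge {b : V → ℕ} {v v' : V} {e : E}
    (h : IsParentEdge head tail b v e) (h' : IsParentEdge head tail b v' e) : v = v' := by
  grind [IsParentEdge]

theorem exists_equiv_option_isParentEdge [Fintype V] [Fintype E] (b : V → ℕ) (r : V)
    (hparent : ∀ v, v ≠ r → ∃ e, IsParentEdge head tail b v e)
    (hcard : Fintype.card E + 1 = Fintype.card V) :
    ∃ f : V ≃ Option E, f r = none ∧ ∀ v e, f v = some e → IsParentEdge head tail b v e := by
  choose p hp using hparent
  let f : V → Option E := fun v => if hv : v = r then none else some (p v hv)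
  have hf : ∀ v e, f v = some e → IsParentEdge head tail b v e := by
    intro v e hve
    by_cases hv : v = r <;> simp only [f, hv, dite_true, dite_false, reduceCtorEq,
      Option.some.injEq] at hve
    exact hve ▸ hp v hv
  have hroot : ∀ v, f v = none → v = r := fun v hv => by
    by_contra hvr
    simp [f, hvr] at hv
  have hinjf : Function.Injective f := by
    intro v v' hvv'
    cases hfv : f v with
    | none => rw [hroot v hfv, hroot v' (hvv' ▸ hfv)]
    | some e => exact (hf v e hfv).eq_of_isParentEdge head tail (hf v' e (hvv' ▸ hfv))
  have hbij : Function.Bijective f := by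
    rw [Fintype.bijective_iff_injective_and_card, Fintype.card_option, hcard]
    exact ⟨hinjf, rfl⟩
  exact ⟨.ofBijective f hbij, by simp [f], hf⟩

section Incidence

variable [DecidableEq V]

theorem incMatrix_eq_zero {e : E} {v : V} (hh : v ≠ head e) (ht : v ≠ tail e) :
    incMatrix head tail e v = 0 := by
  simp [incMatrix, hh, ht]

theorem abs_incMatrix_eq_one {e : E} {v : V} (hv : head e = v ∨ tail e = v) :
    |incMatrix head tail e v| = 1 := by
  simp only [incMatrix, of_apply]
  split_ifs <;> grind

/-- Rows `some e` are the rows of `W D`; the extra row `none` is `lam • eᵣ`. -/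
def rootedIncidence (w : E → ℝ) (r : V) (lam : ℝ) : Matrix (Option E) V ℝ :=
  Matrix.of fun o v => o.elim (if v = r then lam else 0) fun e => w e * incMatrix head tail e v

theorem rootedIncidence_transpose_mul_self [Fintype E] [DecidableEq E] (w : E → ℝ) (r : V)
    (lam : ℝ) :
    (rootedIncidence head tail w r lam)ᵀ * rootedIncidence head tail w r lam
      = (incMatrix head tail)ᵀ * diagonal (fun e => w e ^ 2) * incMatrix head tail
        + single r r (lam ^ 2) := by
  ext u v
  rw [mul_apply, Fintype.sum_option, add_comm, Matrix.add_apply]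
  congr 1
  · rw [mul_apply]
    simp only [mul_diagonal, transpose_apply, rootedIncidence, of_apply, Option.elim]
    exact Finset.sum_congr rfl fun e _ => by ring
  · simp only [transpose_apply, rootedIncidence, of_apply, Option.elim, single_apply]
    split_ifs <;> grind

theorem abs_det_rootedIncidence_submatrix [Fintype V] [Fintype E] (w : E → ℝ) (r : V)
    (lam : ℝ) (b : V → ℕ) (f : V ≃ Option E) (hroot : f r = none)
    (hf : ∀ v e, f v = some e → IsParentEdge head tail b v e) :
    |((rootedIncidence head tail w r lam).submatrix f id).det| = |lam| * ∏ e, |w e| := by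
  set A := (rootedIncidence head tail w r lam).submatrix f id
  have hA : ∀ v u, A v u = (f v).elim (if u = r then lam else 0)
      fun e => w e * incMatrix head tail e u := fun _ _ => rfl
  have hlower : ∀ v u, v ≠ u → A v u ≠ 0 → b u < b v := by
    intro v u hvu hAvu
    rw [hA] at hAvu
    cases hfv : f v with
    | none =>
      obtain rfl : v = r := f.injective (hfv.trans hroot.symm)
      simp only [hfv, Option.elim, ne_eq, ite_eq_right_iff, Classical.not_imp] at hAvu
      exact absurd hAvu.1.symm hvu
    | some e =>
      simp only [hfv, Option.elim, ne_eq, mul_eq_zero, not_or] at hAvu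
      have hend : u = head e ∨ u = tail e := by
        by_contra! h
        exact hAvu.2 (incMatrix_eq_zero head tail h.1 h.2)
      rcases hf v e hfv with ⟨rfl, hlt⟩ | ⟨rfl, hlt⟩ <;> grind
  have hdiag : ∀ v, |A v v| = (f v).elim |lam| fun e => |w e| := by
    intro v
    rw [hA]
    cases hfv : f v with
    | none => simp [f.injective (hfv.trans hroot.symm)]
    | some e =>
      have hend : head e = v ∨ tail e = v := (hf v e hfv).imp And.left And.left
      simp [abs_mul, abs_incMatrix_eq_one head tail hend]
  rw [det_eq_prod_diag_of_apply_ne_zero_lt A b hlower, Finset.abs_prod]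
  simp_rw [hdiag]
  rw [Equiv.prod_comp f fun o => o.elim |lam| fun e => |w e|, Fintype.prod_option]
  rfl

end Incidence

end TreeIncidence

/-- **Rooted GMRF density on a tree.** If the graph is itself a tree (connected and
acyclic), the rooted GMRF density factorizes with explicit normalization:
`π(x) = (2π)^{−n/2} λ (Π_e w(e)) exp(−½ xᵀ(DᵀW²D + λ²eᵣeᵣᵀ)x)` integrates to `1`;
equivalently `det(DᵀW²D + λ²eᵣeᵣᵀ) = λ² Π_e w(e)²`. -/
theorem rooted_GMRF_tree_normalization
    {V E : Type*} [Fintype V] [DecidableEq V] [Fintype E] [DecidableEq E]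
    (head tail : E → V) (w : E → ℝ)
    (hne : ∀ e, head e ≠ tail e)
    (hinj : ∀ e₁ e₂, s(head e₁, tail e₁) = s(head e₂, tail e₂) → e₁ = e₂)
    (hw : ∀ e, 0 < w e)
    (hconn : (graphOf head tail (Set.univ : Set E)).Connected)
    (hacyc : (graphOf head tail (Set.univ : Set E)).IsAcyclic)
    (r : V) (lam : ℝ) (hlam : 0 < lam) :
    (∫ x : V → ℝ,
        (2 * Real.pi) ^ (-(Fintype.card V : ℝ) / 2) * lam * (∏ e, w e) *
          Real.exp (-(1/2) * (x ⬝ᵥ ((incMatrix head tail)ᵀ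
            * Matrix.diagonal (fun e => w e ^ 2) * incMatrix head tail
            + Matrix.single r r (lam ^ 2)).mulVec x))) = 1
    ∧ ((incMatrix head tail)ᵀ * Matrix.diagonal (fun e => w e ^ 2) * incMatrix head tail
        + Matrix.single r r (lam ^ 2)).det = lam ^ 2 * ∏ e, w e ^ 2 := by
  obtain ⟨f, hroot, hf⟩ := exists_equiv_option_isParentEdge head tail _ r
    (fun _ => exists_isParentEdge_dist head tail hconn r)
    (card_add_one_eq_card_of_graphOf head tail hne hinj hconn hacyc)
  set A := (rootedIncidence head tail w r lam).submatrix f id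
  have hgram : Aᵀ * A = (incMatrix head tail)ᵀ * diagonal (fun e => w e ^ 2) * incMatrix head tail
      + single r r (lam ^ 2) := by
    rw [transpose_submatrix, submatrix_mul_equiv, submatrix_id_id,
      rootedIncidence_transpose_mul_self]
  have hdetA : |A.det| = lam * ∏ e, w e := by
    rw [abs_det_rootedIncidence_submatrix head tail w r lam _ f hroot hf, abs_of_pos hlam]
    simp_rw [abs_of_pos (hw _)]
  have hprod : 0 < ∏ e, w e := Finset.prod_pos fun e _ => hw e
  have hpos : 0 < lam * ∏ e, w e := mul_pos hlam hprod
  refine ⟨?_, ?_⟩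
  · rw [← hgram, integral_const_mul,
      integral_exp_neg_mul_dotProduct_transpose_mul_self_mulVec A (abs_pos.1 (hdetA ▸ hpos)),
      hdetA, show Real.pi / (1 / 2) = 2 * Real.pi by ring,
      ← Real.rpow_neg_half_mul_sqrt_pow (by positivity : 0 < 2 * Real.pi) (Fintype.card V)]
    field_simp [hprod.ne']
  · rw [← hgram, det_mul, det_transpose, ← sq, ← sq_abs, hdetA, mul_pow, Finset.prod_pow]
end
end

section
/- Let G = (V, E) be a finite connected simple graph with positive edge weights w(e) > 0, let λ > 0, let r ∈ V, and let φ : ℝ → (0, ∞) be a strictly positive probability density. Consider the hierarchical prior where the spanning tree T is drawn with probability ℙ(T = T̃) = (Π_{e∈T̃} w(e)) / (Σ_{T'∈𝒯(G)} Π_{e∈T'} w(e)) and, given T, x ∈ ℝ^V has density π(x | T) = λ(Π_{e∈T} w'(e)) φ(λ x_r) Π_{{v₁,v₂}∈T} φ(λ(x_{v₁} − x_{v₂})) where normalization is over the rooted tree. Then for every fixed x ∈ ℝ^V, the conditional distribution of T given x is again a weighted random spanning tree with updated edge weights w̃({v₁,v₂}) = w({v₁,v₂}) · φ(λ(x_{v₁}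 − x_{v₂})); that is, for every spanning tree T̃ of G, ℙ(T = T̃ | x) = (Π_{{v₁,v₂}∈T̃} w̃({v₁,v₂})) / (Σ_{T'∈𝒯(G)} Π_{{v₁,v₂}∈T'} w̃({v₁,v₂})). -/
/-!
Every spanning tree of a simple graph on `V` has `|V| - 1` edges, so the scale factors
`λ · λ^{|T|}` and the root factor `φ(λ x_r)` of the rooted-tree density do not depend on the
tree. The remaining likelihood `Π_{e∈T} φ(λ(x_{head e} − x_{tail e}))` multiplies the prior
weights edge by edge, and the constants cancel in the normalisation of Bayes's rule.
-/

open Matrix MeasureTheory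
open scoped BigOperators Classical

noncomputable section

lemma div_sum_mul_left_eq {ι K : Type*} [Field K] (S : Finset ι) (f : ι → K) {k : K} (hk : k ≠ 0) (i : ι) :
    k * f i / ∑ j ∈ S, k * f j = f i / ∑ j ∈ S, f j := by
  rw [← Finset.mul_sum, mul_div_mul_left _ _ hk]

section Graph

variable {V E : Type*} [Fintype V] (head tail : E → V)

lemma card_edgeFinset_graphOf (hne : ∀ e, head e ≠ tail e)
    (hinj : ∀ e₁ e₂, s(head e₁, tail e₁) = s(head e₂, tail e₂) → e₁ = e₂) (s : Finset E) :
    (graphOf head tail (↑s : Set E)).edgeFinset.card = s.card := by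
  symm
  refine Finset.card_bij (fun e _ => s(head e, tail e)) ?_ (fun e₁ _ e₂ _ => hinj e₁ e₂) ?_
  · intro e he
    rw [SimpleGraph.mem_edgeFinset, SimpleGraph.mem_edgeSet]
    exact ⟨hne e, Or.inl ⟨e, he, rfl, rfl⟩⟩
  · intro b hb
    induction b using Sym2.ind with
    | _ a b =>
      rw [SimpleGraph.mem_edgeFinset, SimpleGraph.mem_edgeSet] at hb
      obtain ⟨-, ⟨e, he, rfl, rfl⟩ | ⟨e, he, rfl, rfl⟩⟩ := hb
      · exact ⟨e, he, rfl⟩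
      · exact ⟨e, he, Sym2.eq_swap⟩

lemma IsSpanningTree.card_add_one (hne : ∀ e, head e ≠ tail e)
    (hinj : ∀ e₁ e₂, s(head e₁, tail e₁) = s(head e₂, tail e₂) → e₁ = e₂)
    {s : Finset E} (h : IsSpanningTree head tail s) :
    s.card + 1 = Fintype.card V := by
  rw [← card_edgeFinset_graphOf head tail hne hinj, SimpleGraph.IsTree.card_edgeFinset ⟨h.1, h.2⟩]

end Graph

theorem RST_MRF_conjugacy_general
    {V E : Type*} [Fintype V] [Fintype E]
    (head tail : E → V) (w : E → ℝ)
    (hne : ∀ e, head e ≠ tail e)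
    (hinj : ∀ e₁ e₂, s(head e₁, tail e₁) = s(head e₂, tail e₂) → e₁ = e₂)
    (hw : ∀ e, 0 < w e)
    (r : V) (lam : ℝ) (hlam : 0 < lam)
    (φ : ℝ → ℝ) (hφpos : ∀ z, 0 < φ z)
    (x : V → ℝ) :
    ∀ T ∈ Finset.univ.filter (fun s : Finset E => IsSpanningTree head tail s),
      -- posterior of the tree by Bayes's rule: ℙ(T) π(x|T) normalized over 𝒯(G)
      (((∏ e ∈ T, w e) /
          (∑ T' ∈ Finset.univ.filter (fun s : Finset E => IsSpanningTree head tail s),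
            ∏ e ∈ T', w e)) *
        (lam * (∏ _e ∈ T, lam) * φ (lam * x r) *
          ∏ e ∈ T, φ (lam * (x (head e) - x (tail e))))) /
      (∑ T' ∈ Finset.univ.filter (fun s : Finset E => IsSpanningTree head tail s),
        ((∏ e ∈ T', w e) /
          (∑ T'' ∈ Finset.univ.filter (fun s : Finset E => IsSpanningTree head tail s),
            ∏ e ∈ T'', w e)) *
        (lam * (∏ _e ∈ T', lam) * φ (lam * x r) *
          ∏ e ∈ T', φ (lam * (x (head e) - x (tail e)))))
      -- equals the weighted-random-spanning-tree law with conjugated weights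
      = (∏ e ∈ T, w e * φ (lam * (x (head e) - x (tail e)))) /
        (∑ T' ∈ Finset.univ.filter (fun s : Finset E => IsSpanningTree head tail s),
          ∏ e ∈ T', w e * φ (lam * (x (head e) - x (tail e)))) := by
  intro T hT
  set S := Finset.univ.filter (fun s : Finset E => IsSpanningTree head tail s)
  set A := ∑ T' ∈ S, ∏ e ∈ T', w e
  have hA : 0 < A := Finset.sum_pos (fun T' _ => Finset.prod_pos fun e _ => hw e) ⟨T, hT⟩
  set c := lam * lam ^ (Fintype.card V - 1) * φ (lam * x r)
  have hc : 0 < c := by have := hφpos (lam * x r); positivity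
  have unnormalized_posterior_eq : ∀ T' ∈ S, (∏ e ∈ T', w e) / A *
      (lam * (∏ _e ∈ T', lam) * φ (lam * x r) * ∏ e ∈ T', φ (lam * (x (head e) - x (tail e)))) =
      c / A * ∏ e ∈ T', w e * φ (lam * (x (head e) - x (tail e))) := by
    intro T' hT'
    have hcard := IsSpanningTree.card_add_one head tail hne hinj (Finset.mem_filter.mp hT').2
    rw [Finset.prod_const, show T'.card = Fintype.card V - 1 by omega, Finset.prod_mul_distrib]
    ring
  rw [unnormalized_posterior_eq T hT, Finset.sum_congr rfl unnormalized_posterior_eq]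
  exact div_sum_mul_left_eq S (fun T' => ∏ e ∈ T', w e * φ (lam * (x (head e) - x (tail e))))
    (div_pos hc hA).ne' T

/-- **Random spanning tree hyperprior conjugacy.** In the hierarchical RST-MRF model,
where a spanning tree `T̃` has prior probability proportional to `Π_{e∈T̃} w(e)` and,
given the tree, `x` has the rooted-tree MRF density
`π(x|T̃) = λ (Π_{e∈T̃} λ) φ(λ xᵣ) Π_{e∈T̃} φ(λ(x_{head e} − x_{tail e}))`,
the conditional distribution of the tree given `x` (defined by Bayes's rule) is again
a weighted random spanning tree with conjugated weights
`w̃(e) = w(e) φ(λ(x_{head e} − x_{tail e}))`. -/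
theorem RST_MRF_conjugacy
    {V E : Type*} [Fintype V] [DecidableEq V] [Fintype E] [DecidableEq E]
    (head tail : E → V) (w : E → ℝ)
    (hne : ∀ e, head e ≠ tail e)
    (hinj : ∀ e₁ e₂, s(head e₁, tail e₁) = s(head e₂, tail e₂) → e₁ = e₂)
    (hw : ∀ e, 0 < w e)
    (hconn : (graphOf head tail (Set.univ : Set E)).Connected)
    (r : V) (lam : ℝ) (hlam : 0 < lam)
    (φ : ℝ → ℝ) (hφpos : ∀ z, 0 < φ z) (hφmeas : Measurable φ)
    (hφint : ∫ z : ℝ, φ z = 1)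
    (x : V → ℝ) :
    ∀ T ∈ Finset.univ.filter (fun s : Finset E => IsSpanningTree head tail s),
      -- posterior of the tree by Bayes's rule: ℙ(T) π(x|T) normalized over 𝒯(G)
      (((∏ e ∈ T, w e) /
          (∑ T' ∈ Finset.univ.filter (fun s : Finset E => IsSpanningTree head tail s),
            ∏ e ∈ T', w e)) *
        (lam * (∏ _e ∈ T, lam) * φ (lam * x r) *
          ∏ e ∈ T, φ (lam * (x (head e) - x (tail e))))) /
      (∑ T' ∈ Finset.univ.filter (fun s : Finset E => IsSpanningTree head tail s),
        ((∏ e ∈ T', w e) /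
          (∑ T'' ∈ Finset.univ.filter (fun s : Finset E => IsSpanningTree head tail s),
            ∏ e ∈ T'', w e)) *
        (lam * (∏ _e ∈ T', lam) * φ (lam * x r) *
          ∏ e ∈ T', φ (lam * (x (head e) - x (tail e)))))
      -- equals the weighted-random-spanning-tree law with conjugated weights
      = (∏ e ∈ T, w e * φ (lam * (x (head e) - x (tail e)))) /
        (∑ T' ∈ Finset.univ.filter (fun s : Finset E => IsSpanningTree head tail s),
          ∏ e ∈ T', w e * φ (lam * (x (head e) - x (tail e)))) :=
  RST_MRF_conjugacy_general head tail w hne hinj hw r lam hlam φ hφpos x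
end
end

section
/- For every γ > 0 and every z ∈ ℝ, the Laplace density with rate γ is a Gaussian scale mixture with exponential mixing on the variance: ∫₀^∞ (2πτ)^{−1/2} exp(−z²/(2τ)) · (γ²/2) exp(−(γ²/2)τ) dτ = (γ/2) exp(−γ|z|). -/
/-!
Substituting `τ = s²` and completing the square turn the mixture integral into a constant
multiple of `e^{-γ|z|} ∫₀^∞ exp (-(γ s - |z|/s)² / 2) ds`. For `a, b > 0` the map
`φ s = b s - a/s` is a bijection of `(0, ∞)` onto `ℝ` with Jacobian `b + a/s²`, and the
involution `s ↦ a/(b s)`, which sends `φ` to `-φ`, shows that the `a/s²` part of the Jacobian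
contributes exactly as much as the `b` part (Cauchy–Schlömilch). Hence
`∫₀^∞ g (φ s) ds = (2b)⁻¹ ∫ g` for every even `g`, and the Gaussian integral finishes the
computation. The substitution is done for lower Lebesgue integrals, where splitting the Jacobian
needs no integrability.
-/

open MeasureTheory Real Set
open scoped ENNReal

section CauchySchlomilch

variable {a b : ℝ}

lemma hasDerivAt_mul_sub_div (a b : ℝ) {x : ℝ} (hx : x ≠ 0) :
    HasDerivAt (fun s => b * s - a / s) (b + a / x ^ 2) x := by
  have h : HasDerivAt (fun s => b * s - a * s⁻¹) (b * 1 - a * -(x ^ 2)⁻¹) x :=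
    ((hasDerivAt_id x).const_mul b).sub ((hasDerivAt_inv hx).const_mul a)
  simpa [div_eq_mul_inv] using h

lemma strictMonoOn_mul_sub_div (ha : 0 ≤ a) (hb : 0 < b) :
    StrictMonoOn (fun s => b * s - a / s) (Ioi 0) := by
  intro x hx y hy hxy
  have : a / y ≤ a / x := div_le_div_of_nonneg_left ha hx hxy.le
  have : b * x < b * y := by gcongr
  simp only
  linarith

lemma image_mul_sub_div_Ioi (ha : 0 < a) (hb : 0 < b) :
    (fun s => b * s - a / s) '' Ioi 0 = univ := by
  refine eq_univ_of_forall fun t => ?_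
  -- the positive root of `b s² - t s - a = 0`
  set r := √(t ^ 2 + 4 * a * b)
  have hr : r ^ 2 = t ^ 2 + 4 * a * b := sq_sqrt (by positivity)
  have htr : 0 < t + r := by
    have : |t| < r := by
      rw [← sqrt_sq_eq_abs]
      exact sqrt_lt_sqrt (sq_nonneg t) (by linarith [mul_pos ha hb])
    linarith [neg_abs_le t]
  refine ⟨(t + r) / (2 * b), mem_Ioi.mpr (by positivity), ?_⟩
  field_simp
  nlinarith

lemma mul_sub_div_div_mul_eq_neg (ha : a ≠ 0) (hb : b ≠ 0) {s : ℝ} (hs : s ≠ 0) :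
    b * (a / (b * s)) - a / (a / (b * s)) = -(b * s - a / s) := by
  field_simp
  ring

lemma lintegral_Ioi_div_sq_mul_comp_mul_sub_div (ha : 0 < a) (hb : 0 < b) (f : ℝ → ℝ≥0∞) :
    ∫⁻ s in Ioi 0, ENNReal.ofReal (a / s ^ 2) * f (b * s - a / s)
      = ENNReal.ofReal b * ∫⁻ s in Ioi 0, f (-(b * s - a / s)) := by
  have hψ_image : (fun s => a / (b * s)) '' Ioi 0 = Ioi 0 := by
    ext s
    refine ⟨fun ⟨u, (hu : 0 < u), hs⟩ => hs ▸ mem_Ioi.mpr (by positivity), fun (hs : 0 < s) => ?_⟩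
    exact ⟨a / (b * s), mem_Ioi.mpr (by positivity), by field_simp⟩
  have hψ_deriv : ∀ x ∈ Ioi (0 : ℝ),
      HasDerivWithinAt (fun s => a / (b * s)) (-(a / (b * x ^ 2))) (Ioi 0) x := by
    intro x (hx : 0 < x)
    have hψ : (fun s => a / (b * s)) = fun s => a / b * s⁻¹ := by funext s; field_simp
    rw [hψ]
    exact (((hasDerivAt_inv hx.ne').const_mul (a / b)).congr_deriv (by field_simp)).hasDerivWithinAt
  have hψ_inj : InjOn (fun s => a / (b * s)) (Ioi 0) := by
    intro x (hx : 0 < x) y (hy : 0 < y) h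
    field_simp at h
    linarith
  conv_lhs => rw [← hψ_image, lintegral_image_eq_lintegral_abs_deriv_mul measurableSet_Ioi
    hψ_deriv hψ_inj]
  rw [← lintegral_const_mul' _ _ ENNReal.ofReal_ne_top]
  refine setLIntegral_congr_fun measurableSet_Ioi fun s (hs : 0 < s) => ?_
  rw [mul_sub_div_div_mul_eq_neg ha.ne' hb.ne' hs.ne', ← mul_assoc, ← ENNReal.ofReal_mul
    (abs_nonneg _), abs_neg, abs_of_pos (by positivity)]
  congr 2
  field_simp

theorem lintegral_Ioi_comp_mul_sub_div_of_even (ha : 0 < a) (hb : 0 < b) {f : ℝ → ℝ≥0∞}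
    (hf : Measurable f) (hf_even : ∀ t, f (-t) = f t) :
    ∫⁻ s in Ioi 0, f (b * s - a / s) = ENNReal.ofReal (2 * b)⁻¹ * ∫⁻ t, f t := by
  set L := ∫⁻ s in Ioi 0, f (b * s - a / s)
  have hφ_deriv : ∀ x ∈ Ioi (0 : ℝ),
      HasDerivWithinAt (fun s => b * s - a / s) (b + a / x ^ 2) (Ioi 0) x :=
    fun x hx => (hasDerivAt_mul_sub_div a b (ne_of_gt hx)).hasDerivWithinAt
  have key : ∫⁻ t, f t = ENNReal.ofReal (2 * b) * L := calc
    ∫⁻ t, f t = ∫⁻ s in Ioi 0, ENNReal.ofReal |b + a / s ^ 2| * f (b * s - a / s) := by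
      rw [← lintegral_image_eq_lintegral_abs_deriv_mul measurableSet_Ioi hφ_deriv
        (strictMonoOn_mul_sub_div ha.le hb).injOn, image_mul_sub_div_Ioi ha hb,
        Measure.restrict_univ]
    _ = ∫⁻ s in Ioi 0, (ENNReal.ofReal b * f (b * s - a / s)
          + ENNReal.ofReal (a / s ^ 2) * f (b * s - a / s)) := by
      refine setLIntegral_congr_fun measurableSet_Ioi fun s (hs : 0 < s) => ?_
      rw [abs_of_pos (by positivity), ENNReal.ofReal_add hb.le (by positivity), add_mul]
    _ = ENNReal.ofReal b * L + ENNReal.ofReal b * L := by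
      rw [lintegral_add_left (by fun_prop), lintegral_const_mul _ (by fun_prop),
        lintegral_Ioi_div_sq_mul_comp_mul_sub_div ha hb]
      simp only [hf_even, L]
    _ = ENNReal.ofReal (2 * b) * L := by
      rw [← add_mul, ← ENNReal.ofReal_add hb.le hb.le, two_mul]
  rw [key, ← mul_assoc, ← ENNReal.ofReal_mul (by positivity), inv_mul_cancel₀ (by positivity),
    ENNReal.ofReal_one, one_mul]

lemma integral_exp_neg_sq_div_two : ∫ t, exp (-t ^ 2 / 2) = √(2 * π) := by
  have h := integral_gaussian (1 / 2)
  rw [div_div_eq_mul_div, div_one, mul_comm] at h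
  simpa [neg_div, div_eq_inv_mul] using h

lemma integral_Ioi_exp_neg_mul_sq_div_two (hb : 0 < b) :
    ∫ s in Ioi 0, exp (-(b * s) ^ 2 / 2) = √(2 * π) / (2 * b) := by
  have h := integral_gaussian_Ioi (b ^ 2 / 2)
  rw [div_div_eq_mul_div, sqrt_div' _ (sq_nonneg b), sqrt_sq hb.le, mul_comm π] at h
  rw [div_div, mul_comm b] at h
  simpa [mul_pow, neg_div, mul_div_right_comm] using h

theorem integral_Ioi_exp_neg_sq_mul_sub_div_div_two (ha : 0 ≤ a) (hb : 0 < b) :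
    ∫ s in Ioi 0, exp (-(b * s - a / s) ^ 2 / 2) = √(2 * π) / (2 * b) := by
  rcases ha.eq_or_lt with rfl | ha
  · simpa using integral_Ioi_exp_neg_mul_sq_div_two hb
  have h := lintegral_Ioi_comp_mul_sub_div_of_even
    (f := fun t => ENNReal.ofReal (exp (-t ^ 2 / 2))) ha hb (by fun_prop) (by simp)
  have h_int : Integrable fun t : ℝ => exp (-t ^ 2 / 2) := by
    simpa [neg_div, div_eq_inv_mul] using integrable_exp_neg_mul_sq (by norm_num : (0 : ℝ) < 1 / 2)
  rw [← ofReal_integral_eq_lintegral_ofReal h_int (ae_of_all _ fun _ => (exp_pos _).le),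
    integral_exp_neg_sq_div_two, ← ENNReal.ofReal_mul (by positivity)] at h
  rw [integral_eq_lintegral_of_nonneg_ae (ae_of_all _ fun _ => (exp_pos _).le) (by fun_prop), h,
    ENNReal.toReal_ofReal (by positivity), div_eq_inv_mul]

end CauchySchlomilch

lemma exp_neg_div_mul_exp_neg_mul_eq (a : ℝ) {b s : ℝ} (hs : s ≠ 0) :
    exp (-a ^ 2 / (2 * s ^ 2)) * exp (-(b ^ 2 / 2) * s ^ 2)
      = exp (-b * |a|) * exp (-(b * s - |a| / s) ^ 2 / 2) := by
  rw [← exp_add, ← exp_add]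
  congr 1
  rw [← sq_abs a]
  field_simp
  ring

theorem integral_Ioi_rpow_neg_half_mul_exp_neg_div_mul_exp_neg_mul (a : ℝ) {b : ℝ} (hb : 0 < b) :
    ∫ τ in Ioi 0, τ ^ (-(1 : ℝ) / 2) * exp (-a ^ 2 / (2 * τ)) * exp (-(b ^ 2 / 2) * τ)
      = √(2 * π) / b * exp (-b * |a|) := by
  rw [← integral_comp_rpow_Ioi_of_pos two_pos]
  calc
    _ = ∫ s in Ioi 0, 2 * exp (-b * |a|) * exp (-(b * s - |a| / s) ^ 2 / 2) := by
      refine setIntegral_congr_fun measurableSet_Ioi fun s (hs : 0 < s) => ?_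
      have hs_rpow : (s ^ (2 : ℝ)) ^ (-(1 : ℝ) / 2) = s⁻¹ := by
        rw [← rpow_mul hs.le]; norm_num [rpow_neg_one]
      rw [smul_eq_mul, hs_rpow, rpow_two, mul_assoc s⁻¹, exp_neg_div_mul_exp_neg_mul_eq a hs.ne',
        show (2 : ℝ) - 1 = 1 by norm_num, rpow_one]
      field_simp
    _ = √(2 * π) / b * exp (-b * |a|) := by
      rw [integral_const_mul, integral_Ioi_exp_neg_sq_mul_sub_div_div_two (abs_nonneg a) hb]
      field_simp

/-- **Laplace distribution as a Gaussian scale mixture.** For every `γ > 0` and `z ∈ ℝ`,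
mixing a zero-mean Gaussian with variance `τ` over `τ ~ Exp(γ²/2)` yields the Laplace
density with rate `γ`:
`∫₀^∞ (2πτ)^{−1/2} e^{−z²/(2τ)} (γ²/2) e^{−(γ²/2)τ} dτ = (γ/2) e^{−γ|z|}`. -/
theorem laplace_gaussian_scale_mixture (γ : ℝ) (hγ : 0 < γ) (z : ℝ) :
    (∫ τ in Set.Ioi (0 : ℝ),
        (2 * Real.pi * τ) ^ (-(1 : ℝ)/2) * Real.exp (-z ^ 2 / (2 * τ)) *
          (γ ^ 2 / 2 * Real.exp (-(γ ^ 2 / 2) * τ)))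
      = γ / 2 * Real.exp (-γ * |z|) := by
  have h_integrand : ∀ τ ∈ Ioi (0 : ℝ),
      (2 * π * τ) ^ (-(1 : ℝ) / 2) * exp (-z ^ 2 / (2 * τ)) * (γ ^ 2 / 2 * exp (-(γ ^ 2 / 2) * τ))
        = (√(2 * π))⁻¹ * (γ ^ 2 / 2) *
          (τ ^ (-(1 : ℝ) / 2) * exp (-z ^ 2 / (2 * τ)) * exp (-(γ ^ 2 / 2) * τ)) := by
    intro τ (hτ : 0 < τ)
    rw [mul_rpow (by positivity) hτ.le, sqrt_eq_rpow, ← rpow_neg (by positivity)]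
    ring_nf
  rw [setIntegral_congr_fun measurableSet_Ioi h_integrand, integral_const_mul,
    integral_Ioi_rpow_neg_half_mul_exp_neg_div_mul_exp_neg_mul z hγ]
  field_simp
end
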